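/- Let C = diag(0,2,2) regarded as a 3×3 complex matrix, and let D : ℝ → (3×3 complex matrices) be continuous with each D(τ) symmetric and having all entries real. Suppose Y, Z : ℝ → (3×3 complex matrices) are differentiable on a closed interval [a,b], satisfy Y'(τ) = C·Z(τ) and Z'(τ) = −D(τ)·Y(τ) on [a,b], Y(τ) is invertible for every τ ∈ [a,b], and H(a) := Z(a)·Y(a)⁻¹ is symmetric. Setting H(τ) := Z(τ)·Y(τ)⁻¹, the function τ ↦ det(Im H(τ)) · |det Y(τ)|² is constant on [a,b]. -/

import Mathlib

/-! The system `Y' = C Z`, `Z' = -D Y` with `C`, `D` real symmetric is Hamiltonian, so both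
`Yᵀ Z - Zᵀ Y` and `Yᴴ Z - Zᴴ Y` are constant in `τ`. The first vanishes at `a` because `H(a)` is
symmetric, so `H(τ)` stays symmetric; then `Yᴴ Z - Zᴴ Y = Yᴴ (H - Hᴴ) Y = 2i Yᴴ (Im H) Y`, whose
determinant is `(2i)³ det (Im H) |det Y|²`. -/

open Set Matrix

/-- The real matrix of imaginary parts of the entries of a complex matrix. -/
def imPart (M : Matrix (Fin 3) (Fin 3) ℂ) : Matrix (Fin 3) (Fin 3) ℝ :=
  Matrix.of fun i j => (M i j).im

open Complex

def HasMatrixDerivAt {m n : Type*} (F : ℝ → Matrix m n ℂ) (F' : Matrix m n ℂ) (t : ℝ) : Prop :=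
  ∀ i j, HasDerivAt (fun s => F s i j) (F' i j) t

namespace HasMatrixDerivAt

variable {l m n : Type*} {t : ℝ}

theorem sub {F G : ℝ → Matrix m n ℂ} {F' G' : Matrix m n ℂ} (hF : HasMatrixDerivAt F F' t)
    (hG : HasMatrixDerivAt G G' t) : HasMatrixDerivAt (fun s => F s - G s) (F' - G') t :=
  fun i j => (hF i j).sub (hG i j)

theorem transpose {F : ℝ → Matrix m n ℂ} {F' : Matrix m n ℂ} (hF : HasMatrixDerivAt F F' t) :
    HasMatrixDerivAt (fun s => (F s)ᵀ) F'ᵀ t :=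
  fun i j => hF j i

theorem conjTranspose {F : ℝ → Matrix m n ℂ} {F' : Matrix m n ℂ}
    (hF : HasMatrixDerivAt F F' t) : HasMatrixDerivAt (fun s => (F s)ᴴ) F'ᴴ t :=
  fun i j => (hF j i).star

theorem mul [Fintype m] {F : ℝ → Matrix l m ℂ} {G : ℝ → Matrix m n ℂ} {F' : Matrix l m ℂ}
    {G' : Matrix m n ℂ} (hF : HasMatrixDerivAt F F' t) (hG : HasMatrixDerivAt G G' t) :
    HasMatrixDerivAt (fun s => F s * G s) (F' * G t + F t * G') t := by
  intro i j
  simp only [mul_apply, Matrix.add_apply, ← Finset.sum_add_distrib]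
  exact HasDerivAt.fun_sum fun k _ => (hF i k).mul (hG k j)

theorem eq_of_zero {F : ℝ → Matrix m n ℂ} {a b : ℝ}
    (hF : ∀ t ∈ Icc a b, HasMatrixDerivAt F 0 t) : ∀ t ∈ Icc a b, F t = F a := by
  intro t ht
  ext i j
  exact constant_of_has_deriv_right_zero
    (fun s hs => (hF s hs i j).continuousAt.continuousWithinAt)
    (fun s hs => (hF s (Ico_subset_Icc_self hs) i j).hasDerivWithinAt) t ht

end HasMatrixDerivAt

section Hamiltonian

variable {n : Type*} [Fintype n] {Y Z : ℝ → Matrix n n ℂ} {C D : Matrix n n ℂ} {t : ℝ}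

theorem hasMatrixDerivAt_transpose_mul_sub_zero (hC : Cᵀ = C) (hD : Dᵀ = D)
    (hY : HasMatrixDerivAt Y (C * Z t) t) (hZ : HasMatrixDerivAt Z (-(D * Y t)) t) :
    HasMatrixDerivAt (fun s => (Y s)ᵀ * Z s - (Z s)ᵀ * Y s) 0 t := by
  convert (hY.transpose.mul hZ).sub (hZ.transpose.mul hY) using 1
  rw [transpose_neg, transpose_mul, transpose_mul, hC, hD]
  noncomm_ring

theorem hasMatrixDerivAt_conjTranspose_mul_sub_zero (hC : Cᴴ = C) (hD : Dᴴ = D)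
    (hY : HasMatrixDerivAt Y (C * Z t) t) (hZ : HasMatrixDerivAt Z (-(D * Y t)) t) :
    HasMatrixDerivAt (fun s => (Y s)ᴴ * Z s - (Z s)ᴴ * Y s) 0 t := by
  convert (hY.conjTranspose.mul hZ).sub (hZ.conjTranspose.mul hY) using 1
  rw [conjTranspose_neg, conjTranspose_mul, conjTranspose_mul, hC, hD]
  noncomm_ring

end Hamiltonian

theorem conjTranspose_eq_transpose_of_im_eq_zero {m n : Type*} {A : Matrix m n ℂ}
    (hA : ∀ i j, (A i j).im = 0) : Aᴴ = Aᵀ := by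
  ext i j
  rw [conjTranspose_apply, star_def, conj_eq_iff_im.2 (hA j i), transpose_apply]

theorem sub_conjTranspose_of_isSymm {n : Type*} {H : Matrix n n ℂ} (hH : H.IsSymm) :
    H - Hᴴ = (2 * I) • (H.map im).map ofReal := by
  ext i j
  rw [Matrix.sub_apply, conjTranspose_apply, hH.apply i j, Matrix.smul_apply, map_apply, map_apply,
    star_def, sub_conj]
  push_cast
  ring

section Algebra

variable {n : Type*} [Fintype n] [DecidableEq n]

theorem isSymm_mul_inv_iff {α : Type*} [CommRing α] {M N : Matrix n n α} (hM : IsUnit M.det) :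
    (N * M⁻¹).IsSymm ↔ Mᵀ * N = Nᵀ * M := by
  have hMT : IsUnit Mᵀ := by rwa [isUnit_iff_isUnit_det, det_transpose]
  have hM' : IsUnit M := (isUnit_iff_isUnit_det M).2 hM
  rw [IsSymm, ← hMT.mul_right_inj, ← hM'.mul_left_inj, transpose_mul, transpose_nonsing_inv,
    ← mul_assoc, mul_nonsing_inv _ (by rwa [det_transpose]), one_mul, mul_assoc, mul_assoc,
    nonsing_inv_mul _ hM, mul_one, eq_comm]

theorem det_conjTranspose_mul_sub {M N : Matrix n n ℂ} (hM : IsUnit M.det)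
    (hsymm : Mᵀ * N = Nᵀ * M) :
    (Mᴴ * N - Nᴴ * M).det
      = (2 * I) ^ Fintype.card n * ↑(((N * M⁻¹).map im).det * ‖M.det‖ ^ 2) := by
  set H := N * M⁻¹
  have hN : N = H * M := by rw [mul_assoc, nonsing_inv_mul M hM, mul_one]
  have hsplit : Mᴴ * N - Nᴴ * M = Mᴴ * (H - Hᴴ) * M := by
    rw [hN, conjTranspose_mul]
    noncomm_ring
  have hdet_ofReal : ((H.map im).map ofReal).det = ((H.map im).det : ℂ) :=
    (ofRealHom.map_det _).symm
  rw [hsplit, sub_conjTranspose_of_isSymm ((isSymm_mul_inv_iff hM).2 hsymm), det_mul, det_mul,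
    det_smul, det_conjTranspose, hdet_ofReal, star_def]
  push_cast
  rw [← conj_mul']
  ring

end Algebra

theorem stmt_4_general (a b : ℝ)
    (D : ℝ → Matrix (Fin 3) (Fin 3) ℂ)
    (hDsymm : ∀ τ, (D τ)ᵀ = D τ) (hDreal : ∀ τ i j, (D τ i j).im = 0)
    (Y Z : ℝ → Matrix (Fin 3) (Fin 3) ℂ)
    (hY : ∀ τ ∈ Icc a b, ∀ i j, HasDerivAt (fun t => Y t i j)
        (((Matrix.diagonal ![0, 2, 2] : Matrix (Fin 3) (Fin 3) ℂ) * Z τ) i j) τ)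
    (hZ : ∀ τ ∈ Icc a b, ∀ i j, HasDerivAt (fun t => Z t i j) ((-(D τ * Y τ)) i j) τ)
    (hYinv : ∀ τ ∈ Icc a b, IsUnit (Y τ))
    (hHasymm : (Z a * (Y a)⁻¹)ᵀ = Z a * (Y a)⁻¹) :
    ∀ τ ∈ Icc a b,
      (imPart (Z τ * (Y τ)⁻¹)).det * ‖(Y τ).det‖ ^ 2
        = (imPart (Z a * (Y a)⁻¹)).det * ‖(Y a).det‖ ^ 2 := by
  set C : Matrix (Fin 3) (Fin 3) ℂ := diagonal ![0, 2, 2]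
  have hCT : Cᵀ = C := diagonal_transpose _
  have hCH : Cᴴ = C := (conjTranspose_eq_transpose_of_im_eq_zero fun i j => by
    fin_cases i <;> fin_cases j <;> simp [C]).trans hCT
  have hDH : ∀ τ, (D τ)ᴴ = D τ := fun τ =>
    (conjTranspose_eq_transpose_of_im_eq_zero (hDreal τ)).trans (hDsymm τ)
  have hS := HasMatrixDerivAt.eq_of_zero fun τ hτ =>
    hasMatrixDerivAt_transpose_mul_sub_zero hCT (hDsymm τ) (hY τ hτ) (hZ τ hτ)
  have hW := HasMatrixDerivAt.eq_of_zero fun τ hτ =>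
    hasMatrixDerivAt_conjTranspose_mul_sub_zero hCH (hDH τ) (hY τ hτ) (hZ τ hτ)
  have hdet : ∀ t ∈ Icc a b, IsUnit (Y t).det := fun t ht =>
    (isUnit_iff_isUnit_det _).1 (hYinv t ht)
  intro τ hτ
  have ha : a ∈ Icc a b := ⟨le_rfl, hτ.1.trans hτ.2⟩
  have hsymm_a : (Y a)ᵀ * Z a = (Z a)ᵀ * Y a := (isSymm_mul_inv_iff (hdet a ha)).1 hHasymm
  have hsymm_τ : (Y τ)ᵀ * Z τ = (Z τ)ᵀ * Y τ := by
    rw [← sub_eq_zero, hS τ hτ, hsymm_a, sub_self]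
  have hdetW := congrArg det (hW τ hτ)
  rw [det_conjTranspose_mul_sub (hdet τ hτ) hsymm_τ, det_conjTranspose_mul_sub (hdet a ha) hsymm_a]
    at hdetW
  exact ofReal_injective (mul_left_cancel₀ (pow_ne_zero _ (by simp)) hdetW)

/-- With C = diag(0,2,2), D continuous, symmetric and real-valued,
if Y' = C·Z, Z' = −D·Y on [a,b], Y(τ) is invertible on [a,b], and
H(a) = Z(a)·Y(a)⁻¹ is symmetric, then τ ↦ det(Im H(τ))·|det Y(τ)|² is constant
on [a,b], where H(τ) = Z(τ)·Y(τ)⁻¹. -/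
theorem stmt_4 (a b : ℝ) (hab : a ≤ b)
    (D : ℝ → Matrix (Fin 3) (Fin 3) ℂ) (hD : Continuous D)
    (hDsymm : ∀ τ, (D τ)ᵀ = D τ) (hDreal : ∀ τ i j, (D τ i j).im = 0)
    (Y Z : ℝ → Matrix (Fin 3) (Fin 3) ℂ)
    (hY : ∀ τ ∈ Icc a b, ∀ i j, HasDerivAt (fun t => Y t i j)
        (((Matrix.diagonal ![0, 2, 2] : Matrix (Fin 3) (Fin 3) ℂ) * Z τ) i j) τ)
    (hZ : ∀ τ ∈ Icc a b, ∀ i j, HasDerivAt (fun t => Z t i j) ((-(D τ * Y τ)) i j) τ)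
    (hYinv : ∀ τ ∈ Icc a b, IsUnit (Y τ))
    (hHasymm : (Z a * (Y a)⁻¹)ᵀ = Z a * (Y a)⁻¹) :
    ∀ τ ∈ Icc a b,
      (imPart (Z τ * (Y τ)⁻¹)).det * ‖(Y τ).det‖ ^ 2
        = (imPart (Z a * (Y a)⁻¹)).det * ‖(Y a).det‖ ^ 2 :=
  stmt_4_general a b D hDsymm hDreal Y Z hY hZ hYinv hHasymm
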